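/- arXiv:2202.05120 — 5 statements merged into one kernel-verified Lean document; each statement's English description precedes it below -/
import Mathlib

section
/- For any real matrix A of dimensions n×d, any n×n orthogonal projection matrix P of rank k, any d×d orthogonal projection matrix Q of rank k, and any p ≥ 1, we have ‖A‖_{S_p}^p ≥ ‖P A Q‖_{S_p}^p + ‖(I − P) A (I − Q)‖_{S_p}^p, where ‖·‖_{S_p} denotes the Schatten-p norm. -/
open Matrix BigOperators

/-- The (unsorted) singular values of a real matrix: square roots of the
eigenvalues of `Aᴴ * A`. -/
noncomputable def svU {n d : ℕ} (A : Matrix (Fin n) (Fin d) ℝ) : Fin d → ℝ :=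
  fun j => Real.sqrt ((Matrix.isHermitian_conjTranspose_mul_self A).eigenvalues j)

/-- `sv A i` is the `i`-th largest singular value of `A` (0-indexed). -/
noncomputable def sv {n d : ℕ} (A : Matrix (Fin n) (Fin d) ℝ) (i : Fin d) : ℝ :=
  svU A (Tuple.sort (svU A) i.rev)

/-- `schattenPow p A = ‖A‖_{S_p}^p = ∑ i, σ_i(A)^p`. -/
noncomputable def schattenPow {n d : ℕ} (p : ℝ) (A : Matrix (Fin n) (Fin d) ℝ) : ℝ :=
  ∑ i, sv A i ^ p

/-- The Schatten-`p` norm `‖A‖_{S_p} = (∑ i, σ_i(A)^p)^(1/p)`. -/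
noncomputable def schatten {n d : ℕ} (p : ℝ) (A : Matrix (Fin n) (Fin d) ℝ) : ℝ :=
  (schattenPow p A) ^ (1 / p)

/-- Euclidean norm of a vector. -/
noncomputable def eNorm {n : ℕ} (v : Fin n → ℝ) : ℝ := Real.sqrt (∑ i, v i ^ 2)

/-- Frobenius norm of a matrix. -/
noncomputable def frob {n d : ℕ} (A : Matrix (Fin n) (Fin d) ℝ) : ℝ :=
  Real.sqrt (∑ i, ∑ j, A i j ^ 2)

/-- Operator (spectral) norm: the largest singular value. -/
noncomputable def opNorm {n d : ℕ} (A : Matrix (Fin n) (Fin d) ℝ) : ℝ := ⨆ i, sv A i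

/-!
Put `B = PAQ + (1 - P)A(1 - Q)`. The two summands have orthogonal row spaces and orthogonal
column spaces, so up to zeros the spectrum of `BᴴB` is the union of the spectra of the two
pieces, and `‖PAQ‖ₚᵖ + ‖(1 - P)A(1 - Q)‖ₚᵖ = ‖B‖ₚᵖ`.

Moreover `B = (A + RAS) / 2` with the reflections `R = 2P - 1`, `S = 2Q - 1`. On the Hermitian
dilation `[[0, A], [Aᴴ, 0]]`, whose eigenvalues are `±σᵢ(A)`, this becomes the pinching
`(H + WᴴHW) / 2` by the unitary `W = diag(R, S)`. For convex `f = |·|ᵖ`, `∑ f(λᵢ)` can only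
decrease under pinching: the diagonal entries of any unitary conjugate of `H` are averages of
its eigenvalues with doubly stochastic weights `|Oⱼᵢ|²`, so Jensen applies entrywise.
-/

lemma convexOn_sq_rpow_div_two {p : ℝ} (hp : 1 ≤ p) :
    ConvexOn ℝ Set.univ (fun t : ℝ => (t ^ 2) ^ (p / 2)) := by
  have habs : (fun t : ℝ => (t ^ 2) ^ (p / 2)) = (fun x => x ^ p) ∘ norm := by
    funext t
    rw [Function.comp_apply, Real.norm_eq_abs, ← sq_abs, ← Real.rpow_natCast,
      ← Real.rpow_mul (abs_nonneg t)]
    ring_nf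
  have himage : norm '' (Set.univ : Set ℝ) = Set.Ici 0 :=
    Set.ext fun x => ⟨by rintro ⟨t, -, rfl⟩; exact norm_nonneg t,
      fun hx => ⟨x, trivial, Real.norm_of_nonneg hx⟩⟩
  rw [habs]
  refine ConvexOn.comp ?_ convexOn_univ_norm ?_ <;> rw [himage]
  · exact convexOn_rpow hp
  · exact Real.monotoneOn_rpow_Ici_of_exponent_nonneg (by linarith)

namespace Matrix

section SpectralSum

variable {m n : Type*} [Fintype m] [DecidableEq m] [Fintype n] [DecidableEq n]

/-- `φ` summed over the roots of the characteristic polynomial, i.e. over the eigenvalues with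
multiplicity. When `φ 0 = 0` it ignores extra zero eigenvalues, which is what makes it
invariant under `AB ↦ BA` for rectangular `A`, `B`. -/
noncomputable def spectralSum (φ : ℝ → ℝ) (M : Matrix m m ℝ) : ℝ :=
  (M.charpoly.roots.map φ).sum

variable (φ : ℝ → ℝ)

open Polynomial in
lemma spectralSum_of_charpoly_eq_prod {M : Matrix m m ℝ} {a : m → ℝ}
    (h : M.charpoly = ∏ i, (X - C (a i))) : M.spectralSum φ = ∑ i, φ (a i) := by
  rw [spectralSum, h, roots_prod _ _ (monic_prod_of_monic _ _ fun i _ =>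
    monic_X_sub_C (a i)).ne_zero]
  simp

lemma IsHermitian.spectralSum_eq {H : Matrix m m ℝ} (hH : H.IsHermitian) :
    H.spectralSum φ = ∑ i, φ (hH.eigenvalues i) :=
  spectralSum_of_charpoly_eq_prod φ (by simpa using hH.charpoly_eq)

lemma spectralSum_fromBlocks_zero (M₁ : Matrix m m ℝ) (M₂ : Matrix n n ℝ) :
    (fromBlocks M₁ 0 0 M₂).spectralSum φ = M₁.spectralSum φ + M₂.spectralSum φ := by
  rw [spectralSum, charpoly_fromBlocks_zero₁₂,
    Polynomial.roots_mul (M₁.charpoly_monic.mul M₂.charpoly_monic).ne_zero, Multiset.map_add,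
    Multiset.sum_add, spectralSum, spectralSum]

variable {φ}

open Polynomial in
lemma sum_map_roots_X_pow_mul_charpoly (hφ : φ 0 = 0) (M : Matrix m m ℝ) (e : ℕ) :
    ((X ^ e * M.charpoly).roots.map φ).sum = M.spectralSum φ := by
  rw [roots_mul ((monic_X_pow e).mul M.charpoly_monic).ne_zero, roots_X_pow]
  simp [spectralSum, Multiset.nsmul_singleton, hφ]

lemma spectralSum_mul_comm (hφ : φ 0 = 0) (A : Matrix m n ℝ) (B : Matrix n m ℝ) :
    (A * B).spectralSum φ = (B * A).spectralSum φ := by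
  rw [← sum_map_roots_X_pow_mul_charpoly hφ _ (Fintype.card n), charpoly_mul_comm',
    sum_map_roots_X_pow_mul_charpoly hφ]

lemma spectralSum_conjTranspose_mul_add (hφ : φ 0 = 0) {M N : Matrix m n ℝ}
    (hrow : M * Nᴴ = 0) (hcol : Mᴴ * N = 0) :
    ((M + N)ᴴ * (M + N)).spectralSum φ = (Mᴴ * M).spectralSum φ + (Nᴴ * N).spectralSum φ := by
  have hrow' : N * Mᴴ = 0 := by simpa using congrArg conjTranspose hrow
  have hcol' : Nᴴ * M = 0 := by simpa using congrArg conjTranspose hcol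
  -- `(M + N)ᴴ(M + N) = LᴴL` for the stacked matrix `L = [M; N]`, and `LLᴴ` is block diagonal
  have hstack : (M + N)ᴴ * (M + N) = (fromRows M N)ᴴ * fromRows M N := by
    rw [conjTranspose_fromRows_eq_fromCols_conjTranspose, fromCols_mul_fromRows,
      conjTranspose_add, Matrix.add_mul, Matrix.mul_add, Matrix.mul_add, hcol, hcol',
      add_zero, zero_add]
  rw [hstack, spectralSum_mul_comm hφ, conjTranspose_fromRows_eq_fromCols_conjTranspose,
    fromRows_mul_fromCols, hrow, hrow', spectralSum_fromBlocks_zero,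
    spectralSum_mul_comm hφ M, spectralSum_mul_comm hφ N]

lemma IsHermitian.spectralSum_mul_self {T : Matrix m m ℝ} (hT : T.IsHermitian) :
    (T * T).spectralSum φ = T.spectralSum (fun t => φ (t ^ 2)) := by
  rw [hT.spectralSum_eq]
  refine spectralSum_of_charpoly_eq_prod φ ?_
  conv_lhs => rw [hT.spectral_theorem, ← map_mul, Unitary.conjStarAlgAut_apply,
    charpoly_mul_comm, ← mul_assoc]
  simp [charpoly_diagonal, sq]

end SpectralSum

section Pinching

variable {m : Type*} [Fintype m] [DecidableEq m]

lemma sum_col_sq_of_mem_unitaryGroup {O : Matrix m m ℝ} (hO : O ∈ unitaryGroup m ℝ) (i : m) :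
    ∑ j, O j i ^ 2 = 1 := by
  simpa [mul_apply, sq] using congrFun (congrFun (mem_unitaryGroup_iff'.mp hO) i) i

lemma sum_row_sq_of_mem_unitaryGroup {O : Matrix m m ℝ} (hO : O ∈ unitaryGroup m ℝ) (j : m) :
    ∑ i, O j i ^ 2 = 1 := by
  simpa [mul_apply, sq] using congrFun (congrFun (mem_unitaryGroup_iff.mp hO) j) j

lemma star_mul_diagonal_mul_apply_self (O : Matrix m m ℝ) (v : m → ℝ) (i : m) :
    (star O * diagonal v * O) i i = ∑ j, O j i ^ 2 * v j := by
  rw [mul_apply]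
  simp only [mul_diagonal, star_apply, star_trivial]
  exact Finset.sum_congr rfl fun j _ => by ring

variable {f : ℝ → ℝ} {H : Matrix m m ℝ}

lemma sum_convexOn_diag_conj_diagonal_le (hf : ConvexOn ℝ Set.univ f)
    {O : Matrix m m ℝ} (hO : O ∈ unitaryGroup m ℝ) (v : m → ℝ) :
    ∑ i, f ((star O * diagonal v * O) i i) ≤ ∑ i, f (v i) := by
  calc ∑ i, f ((star O * diagonal v * O) i i)
      ≤ ∑ i, ∑ j, O j i ^ 2 * f (v j) := by
        refine Finset.sum_le_sum fun i _ => ?_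
        rw [star_mul_diagonal_mul_apply_self]
        simpa using hf.map_sum_le (fun j _ => sq_nonneg (O j i))
          (sum_col_sq_of_mem_unitaryGroup hO i) (fun j _ => Set.mem_univ (v j))
    _ = ∑ j, f (v j) := by
        rw [Finset.sum_comm]
        simp [← Finset.sum_mul, sum_row_sq_of_mem_unitaryGroup hO]

lemma IsHermitian.eq_mul_diagonal_mul_star (hH : H.IsHermitian) :
    H = (hH.eigenvectorUnitary : Matrix m m ℝ) * diagonal hH.eigenvalues *
      star (hH.eigenvectorUnitary : Matrix m m ℝ) := by
  conv_lhs => rw [hH.spectral_theorem, Unitary.conjStarAlgAut_apply]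
  rfl

lemma IsHermitian.star_mul_mul_eigenvectorUnitary_apply_self (hH : H.IsHermitian) (i : m) :
    (star (hH.eigenvectorUnitary : Matrix m m ℝ) * H * hH.eigenvectorUnitary) i i =
      hH.eigenvalues i := by
  have hdiag := congrFun (congrFun hH.conjStarAlgAut_star_eigenvectorUnitary i) i
  rw [Unitary.conjStarAlgAut_apply, Unitary.coe_star, star_star] at hdiag
  simpa using hdiag

lemma IsHermitian.sum_convexOn_diag_conj_le (hH : H.IsHermitian)
    (hf : ConvexOn ℝ Set.univ f) {G : Matrix m m ℝ} (hG : G ∈ unitaryGroup m ℝ) :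
    ∑ i, f ((star G * H * G) i i) ≤ ∑ i, f (hH.eigenvalues i) := by
  have hO := Submonoid.mul_mem _ (Unitary.star_mem hH.eigenvectorUnitary.2) hG
  calc ∑ i, f ((star G * H * G) i i)
      = ∑ i, f ((star (star (hH.eigenvectorUnitary : Matrix m m ℝ) * G) *
          diagonal hH.eigenvalues * (star (hH.eigenvectorUnitary : Matrix m m ℝ) * G)) i i) := by
        conv_lhs => rw [hH.eq_mul_diagonal_mul_star]
        simp only [star_mul, star_star, Matrix.mul_assoc]
    _ ≤ ∑ i, f (hH.eigenvalues i) := sum_convexOn_diag_conj_diagonal_le hf hO _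

lemma IsHermitian.spectralSum_pinching_le (hH : H.IsHermitian)
    (hf : ConvexOn ℝ Set.univ f) {W : Matrix m m ℝ} (hW : W ∈ unitaryGroup m ℝ) :
    ((2⁻¹ : ℝ) • (H + star W * H * W)).spectralSum f ≤ H.spectralSum f := by
  set K := (2⁻¹ : ℝ) • (H + star W * H * W) with hKdef
  have hK : K.IsHermitian :=
    (hH.add (isHermitian_conjTranspose_mul_mul W hH)).smul (IsSelfAdjoint.all _)
  obtain ⟨U, hU, hKU⟩ : ∃ U ∈ unitaryGroup m ℝ, ∀ i, hK.eigenvalues i = (star U * K * U) i i :=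
    ⟨_, hK.eigenvectorUnitary.2, fun i => (hK.star_mul_mul_eigenvectorUnitary_apply_self i).symm⟩
  have heig : ∀ i, hK.eigenvalues i =
      2⁻¹ * (star U * H * U) i i + 2⁻¹ * (star (W * U) * H * (W * U)) i i := by
    intro i
    rw [hKU, hKdef]
    simp [star_mul, Matrix.mul_add, Matrix.add_mul, Matrix.mul_assoc]
  rw [hK.spectralSum_eq, hH.spectralSum_eq]
  calc ∑ i, f (hK.eigenvalues i)
      ≤ ∑ i, (2⁻¹ * f ((star U * H * U) i i) + 2⁻¹ * f ((star (W * U) * H * (W * U)) i i)) := by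
        refine Finset.sum_le_sum fun i _ => ?_
        rw [heig]
        simpa using hf.2 (Set.mem_univ _) (Set.mem_univ _) (by norm_num : (0:ℝ) ≤ 2⁻¹)
          (by norm_num : (0:ℝ) ≤ 2⁻¹) (by norm_num)
    _ ≤ 2⁻¹ * ∑ i, f (hH.eigenvalues i) + 2⁻¹ * ∑ i, f (hH.eigenvalues i) := by
        rw [Finset.sum_add_distrib, ← Finset.mul_sum, ← Finset.mul_sum]
        gcongr 2⁻¹ * ?_ + 2⁻¹ * ?_
        · exact hH.sum_convexOn_diag_conj_le hf hU
        · exact hH.sum_convexOn_diag_conj_le hf (Submonoid.mul_mem _ hW hU)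
    _ = ∑ i, f (hH.eigenvalues i) := by ring

end Pinching

section Dilation

variable {m n : Type*}

def hermDilation (A : Matrix m n ℝ) : Matrix (m ⊕ n) (m ⊕ n) ℝ :=
  fromBlocks 0 A Aᴴ 0

lemma isHermitian_hermDilation (A : Matrix m n ℝ) : A.hermDilation.IsHermitian := by
  simp only [IsHermitian, hermDilation, fromBlocks_conjTranspose, conjTranspose_conjTranspose,
    conjTranspose_zero]

variable [Fintype m] [Fintype n]

lemma hermDilation_pinching (A : Matrix m n ℝ) (R : Matrix m m ℝ) (S : Matrix n n ℝ) :
    ((2⁻¹ : ℝ) • (A + star R * A * S)).hermDilation =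
      (2⁻¹ : ℝ) • (A.hermDilation + star (fromBlocks R 0 0 S) * A.hermDilation *
        fromBlocks R 0 0 S) := by
  simp only [hermDilation, star_eq_conjTranspose, fromBlocks_conjTranspose, fromBlocks_multiply,
    fromBlocks_add, fromBlocks_smul, conjTranspose_smul, conjTranspose_add, conjTranspose_mul,
    conjTranspose_conjTranspose, conjTranspose_zero, Matrix.zero_mul, Matrix.mul_zero, zero_add,
    add_zero, smul_zero, star_trivial, Matrix.mul_assoc]

variable [DecidableEq m] [DecidableEq n]

lemma spectralSum_hermDilation {φ : ℝ → ℝ} (hφ : φ 0 = 0) (A : Matrix m n ℝ) :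
    A.hermDilation.spectralSum (fun t => φ (t ^ 2)) = 2 * (Aᴴ * A).spectralSum φ := by
  rw [← A.isHermitian_hermDilation.spectralSum_mul_self, hermDilation, fromBlocks_multiply]
  simp only [Matrix.zero_mul, Matrix.mul_zero, zero_add, add_zero]
  rw [spectralSum_fromBlocks_zero, spectralSum_mul_comm hφ, two_mul]

lemma spectralSum_rpow_pinching_le {p : ℝ} (hp : 1 ≤ p) (A : Matrix m n ℝ) {R : Matrix m m ℝ}
    {S : Matrix n n ℝ} (hR : R ∈ unitaryGroup m ℝ) (hS : S ∈ unitaryGroup n ℝ) :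
    (((2⁻¹ : ℝ) • (A + star R * A * S))ᴴ * ((2⁻¹ : ℝ) • (A + star R * A * S))).spectralSum
      (fun s => s ^ (p / 2)) ≤ (Aᴴ * A).spectralSum (fun s => s ^ (p / 2)) := by
  have h0 : (0 : ℝ) ^ (p / 2) = 0 := Real.zero_rpow (by linarith)
  have hW : fromBlocks R 0 0 S ∈ unitaryGroup (m ⊕ n) ℝ := by
    rw [mem_unitaryGroup_iff] at hR hS ⊢
    rw [star_eq_conjTranspose, fromBlocks_conjTranspose, fromBlocks_multiply,
      ← star_eq_conjTranspose, ← star_eq_conjTranspose, hR, hS]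
    simp
  have := A.isHermitian_hermDilation.spectralSum_pinching_le (convexOn_sq_rpow_div_two hp) hW
  rw [← hermDilation_pinching, spectralSum_hermDilation (φ := fun s => s ^ (p / 2)) h0,
    spectralSum_hermDilation (φ := fun s => s ^ (p / 2)) h0] at this
  linarith

end Dilation

end Matrix

open Matrix

lemma schattenPow_eq_spectralSum {n d : ℕ} (p : ℝ) (A : Matrix (Fin n) (Fin d) ℝ) :
    schattenPow p A = (Aᴴ * A).spectralSum (fun s => s ^ (p / 2)) := by
  have hsort : schattenPow p A = ∑ j, svU A j ^ p :=
    Equiv.sum_comp (Fin.revPerm.trans (Tuple.sort (svU A))) (fun j => svU A j ^ p)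
  rw [(isHermitian_conjTranspose_mul_self A).spectralSum_eq, hsort]
  refine Finset.sum_congr rfl fun j _ => ?_
  rw [svU, Real.sqrt_eq_rpow,
    ← Real.rpow_mul ((posSemidef_conjTranspose_mul_self A).eigenvalues_nonneg j)]
  ring_nf

lemma Matrix.IsSymm.isStarProjection {n : Type*} [Fintype n] {P : Matrix n n ℝ} (hP : P.IsSymm)
    (hPP : P * P = P) : IsStarProjection P :=
  ⟨hPP, by
    rw [IsSelfAdjoint, star_eq_conjTranspose, conjTranspose_eq_transpose_of_trivial]
    exact hP⟩

theorem stmt0_general {n d : ℕ} (A : Matrix (Fin n) (Fin d) ℝ)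
    (P : Matrix (Fin n) (Fin n) ℝ) (Q : Matrix (Fin d) (Fin d) ℝ)
    (hPsymm : P.IsSymm) (hPproj : P * P = P)
    (hQsymm : Q.IsSymm) (hQproj : Q * Q = Q)
    (p : ℝ) (hp : 1 ≤ p) :
    schattenPow p (P * A * Q) + schattenPow p ((1 - P) * A * (1 - Q)) ≤ schattenPow p A := by
  have hP := hPsymm.isStarProjection hPproj
  have hQ := hQsymm.isStarProjection hQproj
  have hrow : P * A * Q * ((1 - P) * A * (1 - Q))ᴴ = 0 := by
    simp only [conjTranspose_mul, ← star_eq_conjTranspose, star_sub, star_one,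
      hP.isSelfAdjoint.star_eq, hQ.isSelfAdjoint.star_eq, Matrix.mul_assoc,
      ← Matrix.mul_assoc Q, hQ.mul_one_sub_self, Matrix.zero_mul, Matrix.mul_zero]
  have hcol : (P * A * Q)ᴴ * ((1 - P) * A * (1 - Q)) = 0 := by
    simp only [conjTranspose_mul, ← star_eq_conjTranspose, hP.isSelfAdjoint.star_eq,
      hQ.isSelfAdjoint.star_eq, Matrix.mul_assoc, ← Matrix.mul_assoc P (1 - P),
      hP.mul_one_sub_self, Matrix.zero_mul, Matrix.mul_zero]
  have hpinch : (2⁻¹ : ℝ) • (A + star (2 * P - 1) * A * (2 * Q - 1)) =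
      P * A * Q + (1 - P) * A * (1 - Q) := by
    simp only [two_mul, star_sub, star_add, star_one, hP.isSelfAdjoint.star_eq, Matrix.sub_mul,
      Matrix.mul_sub, Matrix.add_mul, Matrix.mul_add, Matrix.one_mul, Matrix.mul_one]
    module
  rw [schattenPow_eq_spectralSum, schattenPow_eq_spectralSum, schattenPow_eq_spectralSum,
    ← spectralSum_conjTranspose_mul_add (φ := fun s => s ^ (p / 2)) (Real.zero_rpow (by linarith))
      hrow hcol, ← hpinch]
  exact spectralSum_rpow_pinching_le hp A hP.two_mul_sub_one_mem_unitary
    hQ.two_mul_sub_one_mem_unitary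

/-- Pinching-type inequality for orthogonal projections:
`‖A‖_{S_p}^p ≥ ‖P A Q‖_{S_p}^p + ‖(I − P) A (I − Q)‖_{S_p}^p`. -/
theorem stmt0 {n d k : ℕ} (A : Matrix (Fin n) (Fin d) ℝ)
    (P : Matrix (Fin n) (Fin n) ℝ) (Q : Matrix (Fin d) (Fin d) ℝ)
    (hPsymm : P.IsSymm) (hPproj : P * P = P) (hPrank : P.rank = k)
    (hQsymm : Q.IsSymm) (hQproj : Q * Q = Q) (hQrank : Q.rank = k)
    (p : ℝ) (hp : 1 ≤ p) :
    schattenPow p (P * A * Q) + schattenPow p ((1 - P) * A * (1 - Q)) ≤ schattenPow p A :=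
  stmt0_general A P Q hPsymm hPproj hQsymm hQproj p hp
end

section
/- Let A be a symmetric positive semidefinite n×n matrix with 0 ⪯ A ⪯ I, let z be a unit vector, and let p ∈ [1,2]. Then ‖A(I − zz^T)‖_{S_p}^p ≥ ‖A‖_{S_p}^p − ‖Az‖_2^p. -/
open Matrix BigOperators

/-!
Put `B = AᵀA`, `P = I − zzᵀ` and `r = p / 2 ∈ (0, 1]`. Then `(AP)ᵀ(AP) = PBP`, so the claim reads
`tr B^r − (zᵀBz)^r ≤ tr (PBP)^r`. Expand `tr B^r = ∑ⱼ wⱼᵀ B^r wⱼ` over an orthonormal eigenbasis `wⱼ`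
of `PBP` with eigenvalues `νⱼ`. If `νⱼ ≠ 0` then `wⱼ ⊥ z`, so `wⱼᵀ B wⱼ = νⱼ`, and concavity of
`t ↦ t^r` (Jensen in an eigenbasis of `B`) gives `wⱼᵀ B^r wⱼ ≤ νⱼ^r`. If `νⱼ = 0` then `P wⱼ` is in
the kernel of `B`, so `wⱼᵀ B^r wⱼ = (z ⬝ wⱼ)² zᵀ B^r z`. Summing over `j`, with
`∑ⱼ (z ⬝ wⱼ)² = 1`, yields `tr B^r − zᵀ B^r z ≤ tr (PBP)^r`, which is the reverse
Araki–Lieb–Thirring inequality `tr (P B^r P) ≤ tr (PBP)^r`; Jensen once more bounds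
`zᵀ B^r z ≤ (zᵀBz)^r`.
-/

namespace Matrix

theorem isHermitian_one_sub_vecMulVec {ι : Type*} [DecidableEq ι] (z : ι → ℝ) :
    (1 - vecMulVec z z).IsHermitian := by
  rw [IsHermitian, conjTranspose_sub, conjTranspose_one, conjTranspose_vecMulVec, star_trivial]

variable {ι : Type*} [Fintype ι]

theorem _root_.OrthonormalBasis.sum_dotProduct_mul_dotProduct
    (b : OrthonormalBasis ι ℝ (EuclideanSpace ℝ ι)) (x y : ι → ℝ) :
    ∑ i, (b i ⬝ᵥ x) * (b i ⬝ᵥ y) = x ⬝ᵥ y := by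
  simpa [EuclideanSpace.inner_eq_star_dotProduct, dotProduct_comm] using
    b.sum_inner_mul_inner (WithLp.toLp 2 x) (WithLp.toLp 2 y)

theorem _root_.OrthonormalBasis.dotProduct_self
    (b : OrthonormalBasis ι ℝ (EuclideanSpace ℝ ι)) (i : ι) : b i ⬝ᵥ b i = 1 := by
  classical
  have h := orthonormal_iff_ite.mp b.orthonormal i i
  rw [if_pos rfl, EuclideanSpace.inner_eq_star_dotProduct, star_trivial] at h
  exact h

theorem IsHermitian.dotProduct_mulVec_comm {B : Matrix ι ι ℝ} (hB : B.IsHermitian)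
    (x y : ι → ℝ) : x ⬝ᵥ B *ᵥ y = B *ᵥ x ⬝ᵥ y := by
  have hBt : Bᵀ = B := by rw [← conjTranspose_eq_transpose_of_trivial, hB.eq]
  rw [← dotProduct_transpose_mulVec, hBt, dotProduct_comm]

variable [DecidableEq ι]

theorem one_sub_vecMulVec_mulVec (z x : ι → ℝ) :
    (1 - vecMulVec z z) *ᵥ x = x - (z ⬝ᵥ x) • z := by
  rw [sub_mulVec, one_mulVec, vecMulVec_mulVec, op_smul_eq_smul]

theorem IsHermitian.dotProduct_mulVec_self_eq_sum {B : Matrix ι ι ℝ} (hB : B.IsHermitian)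
    (x : ι → ℝ) :
    x ⬝ᵥ B *ᵥ x = ∑ i, hB.eigenvalues i * (hB.eigenvectorBasis i ⬝ᵥ x) ^ 2 := by
  rw [← hB.eigenvectorBasis.sum_dotProduct_mul_dotProduct x (B *ᵥ x)]
  refine Finset.sum_congr rfl fun i _ => ?_
  rw [hB.dotProduct_mulVec_comm, hB.mulVec_eigenvectorBasis, smul_dotProduct, smul_eq_mul]
  ring

/-- `x ↦ xᵀ B ^ r x`, computed in an eigenbasis of `B`. -/
noncomputable def IsHermitian.rpowForm {B : Matrix ι ι ℝ} (hB : B.IsHermitian) (r : ℝ)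
    (x : ι → ℝ) : ℝ :=
  ∑ i, hB.eigenvalues i ^ r * (hB.eigenvectorBasis i ⬝ᵥ x) ^ 2

theorem IsHermitian.rpowForm_smul {B : Matrix ι ι ℝ} (hB : B.IsHermitian) (r c : ℝ)
    (x : ι → ℝ) : hB.rpowForm r (c • x) = c ^ 2 * hB.rpowForm r x := by
  simp only [rpowForm, dotProduct_smul, smul_eq_mul, Finset.mul_sum]
  exact Finset.sum_congr rfl fun i _ => by ring

theorem IsHermitian.sum_rpowForm {B : Matrix ι ι ℝ} (hB : B.IsHermitian) (r : ℝ)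
    (b : OrthonormalBasis ι ℝ (EuclideanSpace ℝ ι)) :
    ∑ j, hB.rpowForm r (b j) = ∑ i, hB.eigenvalues i ^ r := by
  simp only [rpowForm]
  rw [Finset.sum_comm]
  refine Finset.sum_congr rfl fun i _ => ?_
  have hparseval : ∑ j, (hB.eigenvectorBasis i ⬝ᵥ b j) ^ 2 = 1 := by
    simpa [sq, dotProduct_comm _ (b _), OrthonormalBasis.dotProduct_self] using
      b.sum_dotProduct_mul_dotProduct (hB.eigenvectorBasis i) (hB.eigenvectorBasis i)
  rw [← Finset.mul_sum, hparseval, mul_one]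

theorem PosSemidef.rpowForm_le_rpow {B : Matrix ι ι ℝ} (hB : B.PosSemidef) {r : ℝ}
    (hr0 : 0 ≤ r) (hr1 : r ≤ 1) {x : ι → ℝ} (hx : x ⬝ᵥ x = 1) :
    hB.1.rpowForm r x ≤ (x ⬝ᵥ B *ᵥ x) ^ r := by
  have hweights : ∑ i, (hB.1.eigenvectorBasis i ⬝ᵥ x) ^ 2 = 1 := by
    simpa [sq, hx] using hB.1.eigenvectorBasis.sum_dotProduct_mul_dotProduct x x
  have hjensen := (Real.concaveOn_rpow hr0 hr1).le_map_sum (t := Finset.univ)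
    (fun i _ => sq_nonneg (hB.1.eigenvectorBasis i ⬝ᵥ x)) hweights
    (fun i _ => hB.eigenvalues_nonneg i)
  simp only [smul_eq_mul] at hjensen
  rw [hB.1.dotProduct_mulVec_self_eq_sum]
  calc hB.1.rpowForm r x = ∑ i, (hB.1.eigenvectorBasis i ⬝ᵥ x) ^ 2 * hB.1.eigenvalues i ^ r :=
        Finset.sum_congr rfl fun i _ => mul_comm _ _
    _ ≤ (∑ i, (hB.1.eigenvectorBasis i ⬝ᵥ x) ^ 2 * hB.1.eigenvalues i) ^ r := hjensen
    _ = _ := by simp only [mul_comm]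

theorem PosSemidef.rpowForm_add_of_dotProduct_mulVec_self_eq_zero {B : Matrix ι ι ℝ}
    (hB : B.PosSemidef) {r : ℝ} (hr : 0 < r) {u : ι → ℝ} (hu : u ⬝ᵥ B *ᵥ u = 0)
    (y : ι → ℝ) : hB.1.rpowForm r (u + y) = hB.1.rpowForm r y := by
  rw [hB.1.dotProduct_mulVec_self_eq_sum, Finset.sum_eq_zero_iff_of_nonneg fun i _ =>
    mul_nonneg (hB.eigenvalues_nonneg i) (sq_nonneg _)] at hu
  refine Finset.sum_congr rfl fun i _ => ?_
  rcases mul_eq_zero.mp (hu i (Finset.mem_univ i)) with h | h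
  · rw [h, Real.zero_rpow hr.ne', zero_mul, zero_mul]
  · rw [dotProduct_add, pow_eq_zero_iff two_ne_zero |>.mp h, zero_add]

theorem PosSemidef.rpowForm_le_of_mulVec_eq_smul {B : Matrix ι ι ℝ} (hB : B.PosSemidef)
    {r : ℝ} (hr0 : 0 < r) (hr1 : r ≤ 1) {z : ι → ℝ} (hz : z ⬝ᵥ z = 1) {w : ι → ℝ}
    (hw : w ⬝ᵥ w = 1) {ν : ℝ}
    (hwν : ((1 - vecMulVec z z) * B * (1 - vecMulVec z z)) *ᵥ w = ν • w) :
    hB.1.rpowForm r w ≤ ν ^ r + (z ⬝ᵥ w) ^ 2 * hB.1.rpowForm r z := by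
  set P := 1 - vecMulVec z z
  have hP : P.IsHermitian := isHermitian_one_sub_vecMulVec z
  have hPw : P *ᵥ w = w - (z ⬝ᵥ w) • z := one_sub_vecMulVec_mulVec z w
  have hPz : P *ᵥ z = 0 := by rw [one_sub_vecMulVec_mulVec, hz, one_smul, sub_self]
  have hconj : ∀ x, x ⬝ᵥ (P * B * P) *ᵥ w = P *ᵥ x ⬝ᵥ B *ᵥ (P *ᵥ w) := fun x => by
    rw [← mulVec_mulVec, ← mulVec_mulVec, hP.dotProduct_mulVec_comm]
  have hform : P *ᵥ w ⬝ᵥ B *ᵥ (P *ᵥ w) = ν := by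
    rw [← hconj, hwν, dotProduct_smul, hw, smul_eq_mul, mul_one]
  rcases eq_or_ne ν 0 with rfl | hν
  · refine le_of_eq ?_
    calc hB.1.rpowForm r w = hB.1.rpowForm r (P *ᵥ w + (z ⬝ᵥ w) • z) := by
          rw [hPw, sub_add_cancel]
      _ = (0 : ℝ) ^ r + (z ⬝ᵥ w) ^ 2 * hB.1.rpowForm r z := by
          rw [hB.rpowForm_add_of_dotProduct_mulVec_self_eq_zero hr0 hform,
            IsHermitian.rpowForm_smul, Real.zero_rpow hr0.ne', zero_add]
  · have hzw : z ⬝ᵥ w = 0 := by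
      have h := hconj z
      rw [hwν, dotProduct_smul, hPz, zero_dotProduct, smul_eq_mul] at h
      exact (mul_eq_zero.mp h).resolve_left hν
    rw [hPw, hzw, zero_smul, sub_zero] at hform
    rw [hzw, ← hform]
    simpa using hB.rpowForm_le_rpow hr0.le hr1 hw

theorem PosSemidef.sum_rpow_eigenvalues_sub_le {B : Matrix ι ι ℝ} (hB : B.PosSemidef)
    {r : ℝ} (hr0 : 0 < r) (hr1 : r ≤ 1) {z : ι → ℝ} (hz : z ⬝ᵥ z = 1)
    {C : Matrix ι ι ℝ} (hC : C.IsHermitian)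
    (hCB : C = (1 - vecMulVec z z) * B * (1 - vecMulVec z z)) :
    ∑ i, hB.1.eigenvalues i ^ r - (z ⬝ᵥ B *ᵥ z) ^ r ≤ ∑ j, hC.eigenvalues j ^ r := by
  set w := hC.eigenvectorBasis
  have hparseval : ∑ j, (z ⬝ᵥ w j) ^ 2 = 1 := by
    simpa [sq, dotProduct_comm z, hz] using w.sum_dotProduct_mul_dotProduct z z
  have hsum := calc
    ∑ i, hB.1.eigenvalues i ^ r = ∑ j, hB.1.rpowForm r (w j) := (hB.1.sum_rpowForm r w).symm
    _ ≤ ∑ j, (hC.eigenvalues j ^ r + (z ⬝ᵥ w j) ^ 2 * hB.1.rpowForm r z) :=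
        Finset.sum_le_sum fun j _ => hB.rpowForm_le_of_mulVec_eq_smul hr0 hr1 hz
          (w.dotProduct_self j) (hCB ▸ hC.mulVec_eigenvectorBasis j)
    _ = ∑ j, hC.eigenvalues j ^ r + hB.1.rpowForm r z := by
        rw [Finset.sum_add_distrib, ← Finset.sum_mul, hparseval, one_mul]
    _ ≤ ∑ j, hC.eigenvalues j ^ r + (z ⬝ᵥ B *ᵥ z) ^ r := by
        grw [hB.rpowForm_le_rpow hr0.le hr1 hz]
  linarith

end Matrix

theorem schattenPow_eq_sum_eigenvalues_rpow {m n : ℕ} (p : ℝ) (M : Matrix (Fin m) (Fin n) ℝ) :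
    schattenPow p M =
      ∑ j, (isHermitian_conjTranspose_mul_self M).eigenvalues j ^ (p / 2) := by
  unfold schattenPow sv
  rw [Fintype.sum_equiv (Fin.revPerm.trans (Tuple.sort (svU M)))
    (fun i => svU M (Tuple.sort (svU M) i.rev) ^ p) (fun j => svU M j ^ p) fun i => rfl]
  refine Finset.sum_congr rfl fun j _ => ?_
  rw [svU, Real.sqrt_eq_rpow, ← Real.rpow_mul
    ((posSemidef_conjTranspose_mul_self M).eigenvalues_nonneg j), one_div_mul_eq_div]

theorem eNorm_rpow {n : ℕ} (v : Fin n → ℝ) (p : ℝ) : eNorm v ^ p = (v ⬝ᵥ v) ^ (p / 2) := by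
  rw [eNorm, Real.sqrt_eq_rpow, ← Real.rpow_mul (Finset.sum_nonneg fun i _ => sq_nonneg _),
    one_div_mul_eq_div]
  simp only [dotProduct, sq]

theorem stmt3_general {n : ℕ} (A : Matrix (Fin n) (Fin n) ℝ) (z : Fin n → ℝ) (hz : eNorm z = 1)
    (p : ℝ) (hp1 : 1 ≤ p) (hp2 : p ≤ 2) :
    schattenPow p A - eNorm (A.mulVec z) ^ p ≤
      schattenPow p (A * (1 - Matrix.vecMulVec z z)) := by
  have hzz : z ⬝ᵥ z = 1 := by simpa [hz] using (eNorm_rpow z 2).symm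
  have hAz : A *ᵥ z ⬝ᵥ A *ᵥ z = z ⬝ᵥ (Aᴴ * A) *ᵥ z := by
    rw [← mulVec_mulVec, conjTranspose_eq_transpose_of_trivial, dotProduct_transpose_mulVec]
  have hAP : (A * (1 - vecMulVec z z))ᴴ * (A * (1 - vecMulVec z z)) =
      (1 - vecMulVec z z) * (Aᴴ * A) * (1 - vecMulVec z z) := by
    rw [conjTranspose_mul, (isHermitian_one_sub_vecMulVec z).eq, mul_assoc, mul_assoc, mul_assoc]
  rw [schattenPow_eq_sum_eigenvalues_rpow, schattenPow_eq_sum_eigenvalues_rpow, eNorm_rpow, hAz]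
  exact (posSemidef_conjTranspose_mul_self A).sum_rpow_eigenvalues_sub_le (by linarith)
    (by linarith) hzz _ hAP

/-- For `0 ⪯ A ⪯ I`, a unit vector `z` and `p ∈ [1,2]`,
`‖A(I − zzᵀ)‖_{S_p}^p ≥ ‖A‖_{S_p}^p − ‖Az‖₂^p`. -/
theorem stmt3 {n : ℕ} (A : Matrix (Fin n) (Fin n) ℝ) (hA : A.PosSemidef)
    (hA1 : (1 - A).PosSemidef) (z : Fin n → ℝ) (hz : eNorm z = 1)
    (p : ℝ) (hp1 : 1 ≤ p) (hp2 : p ≤ 2) :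
    schattenPow p A - eNorm (A.mulVec z) ^ p ≤
      schattenPow p (A * (1 - Matrix.vecMulVec z z)) :=
  stmt3_general A z hz p hp1 hp2
end

section
/- Let P and Q be matrices (of the same dimensions) such that the column span of P is orthogonal to the column span of Q and the row span of P is orthogonal to the row span of Q. Then for any p ≥ 2, ‖P‖_{S_p}^p + ‖Q‖_{S_p}^p ≤ ‖P + Q‖_{S_p}^p. -/
open Matrix BigOperators

/-! With `A = PᵀP` and `B = QᵀQ`, orthogonality of the column spans gives
`(P + Q)ᵀ(P + Q) = A + B` and orthogonality of the row spans gives `AB = 0`. Then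
`(X - A)(X - B) = X (X - (A + B))`, so `χ_A χ_B = X^d χ_{A+B}`: the eigenvalues of `A` and `B`
together are those of `A + B` plus `d` zeros. Summing `λ ↦ λ^(p/2)`, which vanishes at `0`,
gives the inequality, in fact with equality. -/

open Polynomial

theorem Matrix.charmatrix_mul_charmatrix_of_mul_eq_zero {R n : Type*} [CommRing R] [Fintype n]
    [DecidableEq n] {A B : Matrix n n R} (h : A * B = 0) :
    charmatrix A * charmatrix B = scalar n (X : R[X]) * charmatrix (A + B) := by
  have hAB : (C : R →+* R[X]).mapMatrix A * (C : R →+* R[X]).mapMatrix B = 0 := by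
    rw [← map_mul, h, map_zero]
  have hX :=
    (scalar_commute (n := n) (X : R[X]) (Commute.all X) ((C : R →+* R[X]).mapMatrix A)).eq
  simp only [charmatrix, map_add, sub_mul, mul_sub, mul_add, hAB, ← hX]
  abel

theorem Matrix.charpoly_mul_charpoly_of_mul_eq_zero {R n : Type*} [CommRing R] [Fintype n]
    [DecidableEq n] {A B : Matrix n n R} (h : A * B = 0) :
    A.charpoly * B.charpoly = X ^ Fintype.card n * (A + B).charpoly := by
  rw [charpoly, charpoly, ← det_mul, charmatrix_mul_charmatrix_of_mul_eq_zero h, det_mul,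
    scalar_apply, det_diagonal, Finset.prod_const, Finset.card_univ, charpoly]

theorem Matrix.IsHermitian.eigenvalues_add_of_mul_eq_zero {𝕜 n : Type*} [RCLike 𝕜] [Fintype n]
    [DecidableEq n] {A B : Matrix n n 𝕜} (hA : A.IsHermitian) (hB : B.IsHermitian)
    (hAB : A * B = 0) :
    Finset.univ.val.map hA.eigenvalues + Finset.univ.val.map hB.eigenvalues =
      Multiset.replicate (Fintype.card n) 0 + Finset.univ.val.map (hA.add hB).eigenvalues := by
  have hroots := congrArg roots (charpoly_mul_charpoly_of_mul_eq_zero hAB)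
  rw [roots_mul ((charpoly_monic A).mul (charpoly_monic B)).ne_zero,
    roots_mul ((monic_X_pow _).mul (charpoly_monic _)).ne_zero, roots_X_pow,
    hA.roots_charpoly_eq_eigenvalues, hB.roots_charpoly_eq_eigenvalues,
    (hA.add hB).roots_charpoly_eq_eigenvalues] at hroots
  apply Multiset.map_injective (RCLike.ofReal_injective (K := 𝕜))
  simpa [Multiset.map_map, Multiset.map_replicate, Multiset.nsmul_singleton] using hroots

theorem Matrix.IsHermitian.sum_eigenvalues_add_of_mul_eq_zero {𝕜 n M : Type*} [RCLike 𝕜]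
    [Fintype n] [DecidableEq n] [AddCommMonoid M] {A B : Matrix n n 𝕜} (hA : A.IsHermitian)
    (hB : B.IsHermitian) (hAB : A * B = 0) {f : ℝ → M} (hf : f 0 = 0) :
    ∑ i, f ((hA.add hB).eigenvalues i) =
      ∑ i, f (hA.eigenvalues i) + ∑ i, f (hB.eigenvalues i) := by
  have h := congrArg (fun s => (s.map f).sum) (hA.eigenvalues_add_of_mul_eq_zero hB hAB)
  simp only [Multiset.map_add, Multiset.sum_add, Multiset.map_replicate, hf, Multiset.map_map,
    Multiset.sum_replicate, smul_zero, zero_add, Function.comp_def, Finset.sum_map_val] at h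
  exact h.symm

theorem schattenPow_eq_sum_eigenvalues {n d : ℕ} (p : ℝ) {A : Matrix (Fin n) (Fin d) ℝ}
    {M : Matrix (Fin d) (Fin d) ℝ} (hM : M.IsHermitian) (h : Aᴴ * A = M) :
    schattenPow p A = ∑ j, hM.eigenvalues j ^ (p / 2) := by
  have hsort : schattenPow p A = ∑ j, svU A j ^ p :=
    Fintype.sum_equiv (Fin.revPerm.trans (Tuple.sort (svU A))) _ _ fun _ => rfl
  have heig : (isHermitian_conjTranspose_mul_self A).eigenvalues = hM.eigenvalues :=
    ((isHermitian_conjTranspose_mul_self A).eigenvalues_eq_eigenvalues_iff hM).2 (by rw [h])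
  rw [hsort, ← heig]
  refine Finset.sum_congr rfl fun j _ => ?_
  rw [svU, Real.sqrt_eq_rpow, ← Real.rpow_mul (eigenvalues_conjTranspose_mul_self_nonneg A j)]
  ring_nf

theorem schattenPow_add_of_orthogonal {n d : ℕ} {P Q : Matrix (Fin n) (Fin d) ℝ}
    (hcol : Pᵀ * Q = 0) (hrow : P * Qᵀ = 0) {p : ℝ} (hp : p ≠ 0) :
    schattenPow p (P + Q) = schattenPow p P + schattenPow p Q := by
  have hP := isHermitian_conjTranspose_mul_self P
  have hQ := isHermitian_conjTranspose_mul_self Q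
  have hQP : Qᵀ * P = 0 := by rw [← transpose_transpose P, ← transpose_mul, hcol, transpose_zero]
  have hsum : (P + Q)ᴴ * (P + Q) = Pᴴ * P + Qᴴ * Q := by
    simp only [conjTranspose_eq_transpose_of_trivial, transpose_add, Matrix.add_mul,
      Matrix.mul_add, hcol, hQP, add_zero, zero_add]
  have hmul : Pᴴ * P * (Qᴴ * Q) = 0 := by
    rw [conjTranspose_eq_transpose_of_trivial, conjTranspose_eq_transpose_of_trivial,
      Matrix.mul_assoc, ← Matrix.mul_assoc P, hrow, Matrix.zero_mul, Matrix.mul_zero]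
  rw [schattenPow_eq_sum_eigenvalues p (hP.add hQ) hsum, schattenPow_eq_sum_eigenvalues p hP rfl,
    schattenPow_eq_sum_eigenvalues p hQ rfl]
  exact hP.sum_eigenvalues_add_of_mul_eq_zero hQ hmul (f := (· ^ (p / 2)))
    (Real.zero_rpow (div_ne_zero hp two_ne_zero))

/-- Mahler's orthogonal operator inequality: if the column spans of `P` and `Q`
are orthogonal and the row spans of `P` and `Q` are orthogonal, then for `p ≥ 2`,
`‖P‖_{S_p}^p + ‖Q‖_{S_p}^p ≤ ‖P + Q‖_{S_p}^p`. -/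
theorem stmt4 {n d : ℕ} (P Q : Matrix (Fin n) (Fin d) ℝ)
    (hcol : Pᵀ * Q = 0) (hrow : P * Qᵀ = 0) (p : ℝ) (hp : 2 ≤ p) :
    schattenPow p P + schattenPow p Q ≤ schattenPow p (P + Q) :=
  (schattenPow_add_of_orthogonal hcol hrow (by linarith)).ge
end

section
/- Let A be an n×d real matrix of full column rank, let W be an n×k matrix with orthonormal columns, and let Z be a d×k matrix with orthonormal columns whose column span equals the column span of A^T W. Then for all i ∈ [k], σ_i(AZ) ≥ σ_i(A^T W), where σ_i denotes the i-th largest singular value. -/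
/-!
Since `Z` has orthonormal columns spanning the column space of `AᵀW`, we have `AᵀW = Z E` with
`E = ZᵀAᵀW`, so `AᵀW` and `E` have the same Gram matrix and hence the same singular values. The
square matrix `E` has the same singular values as `Eᵀ = Wᵀ(AZ)` (`EᵀE` and `EEᵀ` share their
characteristic polynomial), and `(WᵀY)ᵀ(WᵀY) ≤ YᵀY` in the Loewner order because `WWᵀ` is an
orthogonal projection. Finally, sorted eigenvalues are monotone in the Loewner order (Weyl): the
number of eigenvalues `≥ t` is the largest dimension of a subspace on which the Rayleigh quotient
is `≥ t`, which can only grow with the operator.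
-/

open Matrix BigOperators

open Finset
open scoped MatrixOrder ComplexOrder InnerProductSpace

theorem Equiv.card_filter_univ_comp {ι κ : Type*} [Fintype ι] [Fintype κ] (e : ι ≃ κ)
    (p : κ → Prop) [DecidablePred p] : #{i | p (e i)} = #{j | p j} := by
  simp only [card_filter]
  exact e.sum_comp fun j => if p j then 1 else 0

namespace Tuple

variable {n : ℕ} {α : Type*} [LinearOrder α]

theorem le_apply_sort_rev_iff (f : Fin n → α) (i : Fin n) (a : α) :
    a ≤ f (sort f i.rev) ↔ i < #{j | a ≤ f j} := by
  have hanti : Antitone fun j : Fin n => f (sort f j.rev) :=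
    (monotone_sort f).comp_antitone fun _ _ h => Fin.rev_le_rev.2 h
  rw [← lt_card_ge_iff_apply_ge_of_antitone hanti,
    ← (Fin.revPerm.trans (sort f)).card_filter_univ_comp (a ≤ f ·)]
  rfl

theorem apply_sort_rev_le_apply_sort_rev {f g : Fin n → α}
    (h : ∀ a, #{j | a ≤ f j} ≤ #{j | a ≤ g j}) (i : Fin n) :
    f (sort f i.rev) ≤ g (sort g i.rev) := by
  rw [le_apply_sort_rev_iff]
  exact (le_apply_sort_rev_iff f i _).1 le_rfl |>.trans_le (h _)

theorem apply_sort_comp_of_monotone {β : Type*} [LinearOrder β] {φ : α → β} (hφ : Monotone φ)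
    (f : Fin n → α) (i : Fin n) : (φ ∘ f) (sort (φ ∘ f) i) = φ (f (sort f i)) :=
  (congrFun (comp_sort_eq_comp_iff_monotone (f := φ ∘ f).2 (hφ.comp (monotone_sort f))) i).symm

end Tuple

namespace LinearMap.IsSymmetric

open RCLike

variable {𝕜 E : Type*} [RCLike 𝕜] [NormedAddCommGroup E] [InnerProductSpace 𝕜 E]
  [FiniteDimensional 𝕜 E] {T S : E →ₗ[𝕜] E} {n : ℕ} (hn : Module.finrank 𝕜 E = n)

theorem re_inner_apply_self_sub_eq_sum (hT : T.IsSymmetric) (t : ℝ) (x : E) :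
    re ⟪T x, x⟫_𝕜 - t * ‖x‖ ^ 2 =
      ∑ i, (hT.eigenvalues hn i - t) * ‖⟪hT.eigenvectorBasis hn i, x⟫_𝕜‖ ^ 2 := by
  set b := hT.eigenvectorBasis hn
  have hTb (i) : ⟪T x, b i⟫_𝕜 = hT.eigenvalues hn i * ⟪x, b i⟫_𝕜 := by
    rw [hT, hT.apply_eigenvectorBasis, inner_smul_right]
  rw [← b.sum_sq_norm_inner_right, ← b.sum_inner_mul_inner, map_sum, mul_sum, ← sum_sub_distrib]
  refine sum_congr rfl fun i _ => ?_
  rw [hTb, mul_assoc, ← inner_conj_symm x, RCLike.conj_mul, ← ofReal_pow, ← ofReal_mul, ofReal_re,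
    sub_mul]

theorem finrank_le_card_eigenvalues_ge (hT : T.IsSymmetric) {t : ℝ} (V : Submodule 𝕜 E)
    (hV : ∀ x ∈ V, t * ‖x‖ ^ 2 ≤ re ⟪T x, x⟫_𝕜) :
    Module.finrank 𝕜 V ≤ #{i | t ≤ hT.eigenvalues hn i} := by
  set b := hT.eigenvectorBasis hn
  set s : Finset (Fin n) := {i | t ≤ hT.eigenvalues hn i}
  let coords : V →ₗ[𝕜] s → 𝕜 := LinearMap.pi fun i => (innerSL 𝕜 (b i)).toLinearMap ∘ₗ V.subtype
  have hinj : Function.Injective coords := by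
    rw [← LinearMap.ker_eq_bot, Submodule.eq_bot_iff]
    rintro ⟨x, hx⟩ hker
    have hs (i) (hi : i ∈ s) : ⟪b i, x⟫_𝕜 = 0 := congrFun hker ⟨i, hi⟩
    have hterm (i) : (hT.eigenvalues hn i - t) * ‖⟪b i, x⟫_𝕜‖ ^ 2 ≤ 0 := by
      by_cases hi : i ∈ s
      · simp [hs i hi]
      · exact mul_nonpos_of_nonpos_of_nonneg (by simp [s] at hi; linarith) (sq_nonneg _)
    have hzero : ∑ i, (hT.eigenvalues hn i - t) * ‖⟪b i, x⟫_𝕜‖ ^ 2 = 0 :=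
      le_antisymm (sum_nonpos fun i _ => hterm i)
        (re_inner_apply_self_sub_eq_sum hn hT t x ▸ sub_nonneg.2 (hV x hx))
    have hcoord (i) : ⟪b i, x⟫_𝕜 = 0 := by
      by_cases hi : i ∈ s
      · exact hs i hi
      · have hlt : hT.eigenvalues hn i - t < 0 := by simp [s] at hi; linarith
        simpa [hlt.ne] using (sum_eq_zero_iff_of_nonpos fun i _ => hterm i).1 hzero i (mem_univ i)
    have hx0 : ‖x‖ ^ 2 = 0 := by simp [← b.sum_sq_norm_inner_right, hcoord]
    simpa using hx0
  simpa using LinearMap.finrank_le_finrank_of_injective hinj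

theorem exists_finrank_eq_card_eigenvalues_ge (hT : T.IsSymmetric) (t : ℝ) :
    ∃ V : Submodule 𝕜 E, Module.finrank 𝕜 V = #{i | t ≤ hT.eigenvalues hn i} ∧
      ∀ x ∈ V, t * ‖x‖ ^ 2 ≤ re ⟪T x, x⟫_𝕜 := by
  set s : Finset (Fin n) := {i | t ≤ hT.eigenvalues hn i}
  have hb := (hT.eigenvectorBasis hn).orthonormal
  refine ⟨Submodule.span 𝕜 (Set.range (hT.eigenvectorBasis hn ∘ Subtype.val : s → E)), ?_,
    fun x hx => ?_⟩
  · rw [finrank_span_eq_card (hb.linearIndependent.comp _ Subtype.val_injective)]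
    simp
  have hcoord (i) (hi : i ∉ s) : ⟪hT.eigenvectorBasis hn i, x⟫_𝕜 = 0 := by
    obtain ⟨c, rfl⟩ := (Submodule.mem_span_range_iff_exists_fun 𝕜).1 hx
    simp only [inner_sum, inner_smul_right, Function.comp_apply, OrthonormalBasis.inner_eq_ite]
    exact sum_eq_zero fun j _ => by simp [show i ≠ j from fun h => hi (h ▸ j.2)]
  rw [← sub_nonneg, re_inner_apply_self_sub_eq_sum hn hT]
  refine sum_nonneg fun i _ => ?_
  by_cases hi : i ∈ s
  · exact mul_nonneg (by simp [s] at hi; linarith) (sq_nonneg _)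
  · simp [hcoord i hi]

theorem card_eigenvalues_ge_le (hT : T.IsSymmetric) (hS : S.IsSymmetric) (hST : (S - T).IsPositive)
    (t : ℝ) : #{i | t ≤ hT.eigenvalues hn i} ≤ #{i | t ≤ hS.eigenvalues hn i} := by
  obtain ⟨V, hVdim, hV⟩ := hT.exists_finrank_eq_card_eigenvalues_ge hn t
  refine hVdim ▸ hS.finrank_le_card_eigenvalues_ge hn V fun x hx => (hV x hx).trans ?_
  simpa [inner_sub_left] using hST.re_inner_nonneg_left x

end LinearMap.IsSymmetric

namespace Matrix.IsHermitian

variable {𝕜 : Type*} [RCLike 𝕜] {ι : Type*} [Fintype ι] [DecidableEq ι]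

theorem card_eigenvalues_ge_le {A B : Matrix ι ι 𝕜} (hA : A.IsHermitian) (hB : B.IsHermitian)
    (hAB : A ≤ B) (t : ℝ) : #{i | t ≤ hA.eigenvalues i} ≤ #{i | t ≤ hB.eigenvalues i} := by
  let e : ι ≃ Fin (Fintype.card ι) := (Fintype.equivOfCardEq (Fintype.card_fin _)).symm
  have hcount (f : Fin (Fintype.card ι) → ℝ) : #{i | t ≤ f (e i)} = #{j | t ≤ f j} :=
    e.card_filter_univ_comp (t ≤ f ·)
  -- `eigenvalues` reindexes the sorted spectrum `eigenvalues₀` of `toEuclideanLin` by a bijection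
  change #{i | t ≤ hA.eigenvalues₀ (e i)} ≤ #{i | t ≤ hB.eigenvalues₀ (e i)}
  rw [hcount, hcount]
  refine LinearMap.IsSymmetric.card_eigenvalues_ge_le _ _ _ ?_ t
  rwa [← map_sub, isPositive_toEuclideanLin_iff]

theorem eigenvalues_sort_rev_le {n : ℕ} {A B : Matrix (Fin n) (Fin n) 𝕜} (hA : A.IsHermitian)
    (hB : B.IsHermitian) (hAB : A ≤ B) (i : Fin n) :
    hA.eigenvalues (Tuple.sort hA.eigenvalues i.rev) ≤
      hB.eigenvalues (Tuple.sort hB.eigenvalues i.rev) :=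
  Tuple.apply_sort_rev_le_apply_sort_rev (card_eigenvalues_ge_le hA hB hAB) i

end Matrix.IsHermitian

namespace Matrix

theorem conjTranspose_mul_conjTranspose_mul_le {𝕜 : Type*} [RCLike 𝕜] {m n k : Type*} [Fintype m]
    [Fintype n] [Fintype k] [DecidableEq k] {W : Matrix m k 𝕜} (hW : Wᴴ * W = 1)
    (Y : Matrix m n 𝕜) : (Wᴴ * Y)ᴴ * (Wᴴ * Y) ≤ Yᴴ * Y := by
  have hproj : Yᴴ * Y - (Wᴴ * Y)ᴴ * (Wᴴ * Y) = (Y - W * (Wᴴ * Y))ᴴ * (Y - W * (Wᴴ * Y)) := by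
    simp only [conjTranspose_sub, conjTranspose_mul, conjTranspose_conjTranspose]
    simp only [Matrix.sub_mul, Matrix.mul_sub, Matrix.mul_assoc]
    rw [← Matrix.mul_assoc Wᴴ W, hW, Matrix.one_mul]
    abel
  rw [Matrix.le_iff, hproj]
  exact posSemidef_conjTranspose_mul_self _

theorem mul_transpose_mul_eq_self {R : Type*} [CommRing R] {m n k : Type*} [Fintype m]
    [Fintype n] [Fintype k] [DecidableEq n] [DecidableEq k] {Z : Matrix m k R} (hZ : Zᵀ * Z = 1)
    {X : Matrix m n R} (hX : LinearMap.range X.mulVecLin ≤ LinearMap.range Z.mulVecLin) :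
    Z * (Zᵀ * X) = X := by
  refine ext_of_mulVec_single fun j => ?_
  obtain ⟨y, hy⟩ := hX ⟨Pi.single j 1, rfl⟩
  change Z *ᵥ y = X *ᵥ Pi.single j 1 at hy
  rw [← mulVec_mulVec, ← mulVec_mulVec, ← hy, mulVec_mulVec (M := Zᵀ), hZ, one_mulVec]

end Matrix

section SingularValues

variable {m p d : ℕ}

theorem sv_eq_sqrt_eigenvalues_sort (X : Matrix (Fin m) (Fin d) ℝ) (i : Fin d) :
    sv X i = √((isHermitian_conjTranspose_mul_self X).eigenvalues
      (Tuple.sort (isHermitian_conjTranspose_mul_self X).eigenvalues i.rev)) :=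
  Tuple.apply_sort_comp_of_monotone Real.sqrt_monotone _ i.rev

theorem sv_le_sv_of_transpose_mul_self_le {X : Matrix (Fin m) (Fin d) ℝ}
    {Y : Matrix (Fin p) (Fin d) ℝ} (h : Xᵀ * X ≤ Yᵀ * Y) (i : Fin d) : sv X i ≤ sv Y i := by
  rw [sv_eq_sqrt_eigenvalues_sort, sv_eq_sqrt_eigenvalues_sort]
  exact Real.sqrt_le_sqrt (IsHermitian.eigenvalues_sort_rev_le _ _ (by simpa using h) i)

theorem sv_eq_of_charpoly_eq {X : Matrix (Fin m) (Fin d) ℝ} {Y : Matrix (Fin p) (Fin d) ℝ}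
    (h : (Xᵀ * X).charpoly = (Yᵀ * Y).charpoly) : sv X = sv Y := by
  have heig := (IsHermitian.eigenvalues_eq_eigenvalues_iff (isHermitian_conjTranspose_mul_self X)
    (isHermitian_conjTranspose_mul_self Y)).2 (by simpa using h)
  have hsvU : svU X = svU Y := funext fun j => by simp only [svU, heig]
  funext i
  rw [sv, sv, hsvU]

theorem sv_transpose (E : Matrix (Fin d) (Fin d) ℝ) : sv Eᵀ = sv E :=
  sv_eq_of_charpoly_eq (by rw [transpose_transpose, charpoly_mul_comm])

theorem sv_mul_of_transpose_mul_self_eq_one {Z : Matrix (Fin m) (Fin p) ℝ} (hZ : Zᵀ * Z = 1)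
    (E : Matrix (Fin p) (Fin d) ℝ) : sv (Z * E) = sv E :=
  sv_eq_of_charpoly_eq (by rw [transpose_mul, Matrix.mul_assoc, ← Matrix.mul_assoc Zᵀ, hZ,
    Matrix.one_mul])

theorem sv_transpose_mul_le {W : Matrix (Fin m) (Fin p) ℝ} (hW : Wᵀ * W = 1)
    (Y : Matrix (Fin m) (Fin d) ℝ) (i : Fin d) : sv (Wᵀ * Y) i ≤ sv Y i := by
  refine sv_le_sv_of_transpose_mul_self_le ?_ i
  simpa using conjTranspose_mul_conjTranspose_mul_le (by simpa using hW) Y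

end SingularValues

theorem stmt12_general {n d k : ℕ} (A : Matrix (Fin n) (Fin d) ℝ)
    (W : Matrix (Fin n) (Fin k) ℝ) (hW : Wᵀ * W = 1)
    (Z : Matrix (Fin d) (Fin k) ℝ) (hZ : Zᵀ * Z = 1)
    (hspan : LinearMap.range Z.mulVecLin = LinearMap.range (Aᵀ * W).mulVecLin) :
    ∀ i : Fin k, sv (Aᵀ * W) i ≤ sv (A * Z) i := by
  intro i
  have hfactor : Z * (Zᵀ * (Aᵀ * W)) = Aᵀ * W := mul_transpose_mul_eq_self hZ hspan.ge
  calc sv (Aᵀ * W) i = sv (Z * (Zᵀ * (Aᵀ * W))) i := by rw [hfactor]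
    _ = sv (Zᵀ * (Aᵀ * W))ᵀ i := by rw [sv_mul_of_transpose_mul_self_eq_one hZ, sv_transpose]
    _ = sv (Wᵀ * (A * Z)) i := by simp [transpose_mul, Matrix.mul_assoc]
    _ ≤ sv (A * Z) i := sv_transpose_mul_le hW _ i

/-- If `A` has full column rank, `W` has orthonormal columns and `Z` is an
orthonormal basis for the column span of `AᵀW`, then `σ_i(AZ) ≥ σ_i(AᵀW)`. -/
theorem stmt12 {n d k : ℕ} (A : Matrix (Fin n) (Fin d) ℝ) (hA : A.rank = d)
    (W : Matrix (Fin n) (Fin k) ℝ) (hW : Wᵀ * W = 1)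
    (Z : Matrix (Fin d) (Fin k) ℝ) (hZ : Zᵀ * Z = 1)
    (hspan : LinearMap.range Z.mulVecLin = LinearMap.range (Aᵀ * W).mulVecLin) :
    ∀ i : Fin k, sv (Aᵀ * W) i ≤ sv (A * Z) i :=
  stmt12_general A W hW Z hZ hspan
end

section
/- Let A be an n×d matrix with SVD A = UΣV^T, k ∈ [d], ℓ ∈ [k], ε ∈ (0,1), and suppose (σ_ℓ − σ_{ℓ+1})/σ_ℓ ≥ ε/d and σ_ℓ > 0. Let w₁,...,w_ℓ ∈ ℝ^n be orthonormal vectors such that ‖A^T w_i‖₂² ≥ σ_i² − δ·σ_{k+1}² for all i ∈ [ℓ], where δ > 0. Let W = [w₁|...|w_ℓ]. Then ‖A_ℓ^T(I − WW^T)‖_F² ≤ ℓ·δ·σ_{k+1}² / (1 − (σ_{ℓ+1}/σ_ℓ)²), where A_ℓ is the best rank-ℓ approximation to A. -/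
open Matrix BigOperators

/-!
Let `cⱼ = ‖Wᵀuⱼ‖²` be the overlap of the `j`-th left singular vector with the span of `W`; then
`0 ≤ cⱼ ≤ 1` and `∑ cⱼ ≤ ℓ`. In these terms the residual is `‖A_ℓᵀ(I - WWᵀ)‖_F² = ∑_{j≤ℓ} σⱼ²(1 - cⱼ)`
and the captured energy is `∑ᵢ ‖Aᵀwᵢ‖² = ∑ⱼ σⱼ² cⱼ`, which by the per-vector guarantee is at least
`∑_{j≤ℓ} σⱼ² - ℓδσ_{k+1}²`. Each tail direction captures at most `σ_{ℓ+1}²` per unit of overlap, and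
the tail has at most `ℓ - ∑_{j≤ℓ} cⱼ` units, so `∑_{j≤ℓ} (σⱼ² - σ_{ℓ+1}²)(1 - cⱼ) ≤ ℓδσ_{k+1}²`.
Finally `σⱼ ≥ σ_ℓ` for `j ≤ ℓ` gives `σⱼ² ≤ (σⱼ² - σ_{ℓ+1}²) / (1 - (σ_{ℓ+1}/σ_ℓ)²)`.
-/

open Finset

lemma Matrix.transpose_mul_self_one_sub_mul {R m n p : Type*} [CommRing R] [Fintype m]
    [Fintype n] [DecidableEq m] [DecidableEq n] {X : Matrix m n R} (hX : Xᵀ * X = 1)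
    (Y : Matrix m p R) :
    ((1 - X * Xᵀ) * Y)ᵀ * ((1 - X * Xᵀ) * Y) = Yᵀ * Y - (Xᵀ * Y)ᵀ * (Xᵀ * Y) := by
  have hP : X * Xᵀ * (X * Xᵀ) = X * Xᵀ := by
    rw [Matrix.mul_assoc, ← Matrix.mul_assoc Xᵀ, hX, Matrix.one_mul]
  have hQ : (1 - X * Xᵀ) * (1 - X * Xᵀ) = 1 - X * Xᵀ := by
    rw [Matrix.sub_mul, Matrix.one_mul, Matrix.mul_sub, Matrix.mul_one, hP, sub_self, sub_zero]
  calc ((1 - X * Xᵀ) * Y)ᵀ * ((1 - X * Xᵀ) * Y) = Yᵀ * ((1 - X * Xᵀ) * (1 - X * Xᵀ)) * Y := by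
        simp only [transpose_mul, transpose_sub, transpose_one, transpose_transpose, Matrix.mul_assoc]
    _ = Yᵀ * Y - (Xᵀ * Y)ᵀ * (Xᵀ * Y) := by
        rw [hQ]
        simp only [Matrix.mul_sub, Matrix.sub_mul, Matrix.mul_one, transpose_mul, transpose_transpose,
          Matrix.mul_assoc]

section Overlap

variable {m n p : Type*} [Fintype m] [Fintype n] [Fintype p]

/-- `overlap U W j = ‖Wᵀ uⱼ‖²`, for orthonormal columns `W` the squared length of the projection
of the `j`-th column of `U` onto the column span of `W`. -/
def overlap (U : Matrix m n ℝ) (W : Matrix m p ℝ) (j : n) : ℝ := ((Uᵀ * W) * (Uᵀ * W)ᵀ) j j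

lemma Matrix.posSemidef_transpose_mul_self (M : Matrix m n ℝ) : (Mᵀ * M).PosSemidef := by
  simpa [conjTranspose_eq_transpose_of_trivial] using posSemidef_conjTranspose_mul_self M

lemma overlap_nonneg (U : Matrix m n ℝ) (W : Matrix m p ℝ) (j : n) : 0 ≤ overlap U W j := by
  simpa [overlap, conjTranspose_eq_transpose_of_trivial] using
    (posSemidef_self_mul_conjTranspose (Uᵀ * W)).diag_nonneg (i := j)

lemma overlap_le_one [DecidableEq m] [DecidableEq n] [DecidableEq p] {U : Matrix m n ℝ}
    {W : Matrix m p ℝ} (hU : Uᵀ * U = 1) (hW : Wᵀ * W = 1) (j : n) : overlap U W j ≤ 1 := by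
  have h := (posSemidef_transpose_mul_self ((1 - W * Wᵀ) * U)).diag_nonneg (i := j)
  rw [transpose_mul_self_one_sub_mul hW, hU] at h
  simpa [overlap, transpose_mul] using h

lemma sum_overlap_le [DecidableEq m] [DecidableEq n] [DecidableEq p] {U : Matrix m n ℝ}
    {W : Matrix m p ℝ} (hU : Uᵀ * U = 1) (hW : Wᵀ * W = 1) :
    ∑ j, overlap U W j ≤ Fintype.card p := by
  have h := (posSemidef_transpose_mul_self ((1 - U * Uᵀ) * W)).trace_nonneg
  rw [transpose_mul_self_one_sub_mul hU, hW, trace_sub, trace_one, trace_mul_comm] at h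
  simpa [overlap, trace] using h

end Overlap

lemma frob_sq {r s : ℕ} (M : Matrix (Fin r) (Fin s) ℝ) : frob M ^ 2 = ∑ i, ∑ j, M i j ^ 2 :=
  Real.sq_sqrt (by positivity)

lemma frob_sq_eq_trace {r s : ℕ} (M : Matrix (Fin r) (Fin s) ℝ) : frob M ^ 2 = trace (Mᵀ * M) := by
  rw [frob_sq, sum_comm]
  simp [trace, mul_apply, sq]

lemma frob_sq_mul_diagonal_mul {r d s : ℕ} {V : Matrix (Fin r) (Fin d) ℝ} (hV : Vᵀ * V = 1)
    (v : Fin d → ℝ) (M : Matrix (Fin d) (Fin s) ℝ) :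
    frob (V * diagonal v * M) ^ 2 = ∑ j, v j ^ 2 * (M * Mᵀ) j j := by
  have h : (V * diagonal v * M)ᵀ * (V * diagonal v * M) =
      Mᵀ * (diagonal (fun j => v j ^ 2) * M) := by
    simp only [transpose_mul, diagonal_transpose, Matrix.mul_assoc]
    rw [← Matrix.mul_assoc Vᵀ, hV, Matrix.one_mul, ← Matrix.mul_assoc (diagonal v),
      diagonal_mul_diagonal]
    simp only [sq]
  rw [frob_sq_eq_trace, h, trace_mul_comm, Matrix.mul_assoc]
  simp [trace, diagonal_mul]

section SVD

variable {n d ℓ : ℕ} {U : Matrix (Fin n) (Fin d) ℝ} {V : Matrix (Fin d) (Fin d) ℝ}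
  {W : Matrix (Fin n) (Fin ℓ) ℝ}

lemma frob_sq_svd_transpose_mul (hV : Vᵀ * V = 1) (v : Fin d → ℝ) :
    frob ((U * diagonal v * Vᵀ)ᵀ * W) ^ 2 = ∑ j, v j ^ 2 * overlap U W j := by
  have h : (U * diagonal v * Vᵀ)ᵀ * W = V * diagonal v * (Uᵀ * W) := by
    simp [transpose_mul, Matrix.mul_assoc]
  rw [h, frob_sq_mul_diagonal_mul hV]
  rfl

lemma frob_sq_svd_transpose_mul_one_sub (hU : Uᵀ * U = 1) (hV : Vᵀ * V = 1) (hW : Wᵀ * W = 1)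
    (v : Fin d → ℝ) :
    frob ((U * diagonal v * Vᵀ)ᵀ * (1 - W * Wᵀ)) ^ 2 = ∑ j, v j ^ 2 * (1 - overlap U W j) := by
  have h : (U * diagonal v * Vᵀ)ᵀ * (1 - W * Wᵀ) = V * diagonal v * ((1 - W * Wᵀ) * U)ᵀ := by
    simp [transpose_mul, transpose_sub, Matrix.mul_assoc]
  rw [h, frob_sq_mul_diagonal_mul hV, transpose_transpose, transpose_mul_self_one_sub_mul hW, hU]
  simp [overlap, transpose_mul, one_apply]

end SVD

section Scalar

variable {ι : Type*} [Fintype ι] [DecidableEq ι]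

lemma sum_sub_mul_one_sub_le (μ c : ι → ℝ) (I : Finset ι) (S E : ℝ)
    (hS : 0 ≤ S) (htail : ∀ j ∉ I, μ j ≤ S) (hc0 : ∀ j, 0 ≤ c j)
    (hcsum : ∑ j, c j ≤ #I) (hcapt : ∑ j ∈ I, μ j - E ≤ ∑ j, μ j * c j) :
    ∑ j ∈ I, (μ j - S) * (1 - c j) ≤ E := by
  have htail_le : ∑ j ∈ Iᶜ, μ j * c j ≤ S * ∑ j ∈ Iᶜ, c j := by
    rw [mul_sum]
    exact sum_le_sum fun j hj => mul_le_mul_of_nonneg_right (htail j (mem_compl.1 hj)) (hc0 j)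
  have hcompl : ∑ j ∈ Iᶜ, c j ≤ #I - ∑ j ∈ I, c j := by
    linarith [sum_add_sum_compl I c]
  have hexpand : ∑ j ∈ I, (μ j - S) * (1 - c j) =
      ∑ j ∈ I, μ j - ∑ j ∈ I, μ j * c j - S * (#I - ∑ j ∈ I, c j) := by
    simp only [mul_sub, sub_mul, mul_one, sum_sub_distrib, mul_sum, sum_const, nsmul_eq_mul]
    ring
  linarith [sum_add_sum_compl I (fun j => μ j * c j), mul_le_mul_of_nonneg_left hcompl hS]

lemma sum_mul_one_sub_le (μ c : ι → ℝ) (I : Finset ι) (S T E : ℝ)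
    (hS : 0 ≤ S) (hST : S < T) (hhead : ∀ j ∈ I, T ≤ μ j) (htail : ∀ j ∉ I, μ j ≤ S)
    (hc0 : ∀ j, 0 ≤ c j) (hc1 : ∀ j, c j ≤ 1)
    (hcsum : ∑ j, c j ≤ #I) (hcapt : ∑ j ∈ I, μ j - E ≤ ∑ j, μ j * c j) :
    ∑ j ∈ I, μ j * (1 - c j) ≤ E / (1 - S / T) := by
  have hT : 0 < T := hS.trans_lt hST
  have hgap : 0 < T - S := sub_pos.2 hST
  have hconst : E / (1 - S / T) = T / (T - S) * E := by
    field_simp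
  have hpt : ∀ j ∈ I, μ j * (1 - c j) ≤ T / (T - S) * ((μ j - S) * (1 - c j)) := by
    intro j hj
    have hμ : μ j ≤ T / (T - S) * (μ j - S) := by
      rw [div_mul_eq_mul_div, le_div_iff₀ hgap]
      linarith [mul_nonneg hS (sub_nonneg.2 (hhead j hj))]
    linarith [mul_le_mul_of_nonneg_right hμ (sub_nonneg.2 (hc1 j))]
  calc ∑ j ∈ I, μ j * (1 - c j)
      ≤ T / (T - S) * ∑ j ∈ I, (μ j - S) * (1 - c j) := by
        rw [mul_sum]; exact sum_le_sum hpt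
    _ ≤ T / (T - S) * E := by
        gcongr
        exact sum_sub_mul_one_sub_le μ c I S E hS htail hc0 hcsum hcapt
    _ = E / (1 - S / T) := hconst.symm

end Scalar

lemma Fin.sum_filter_val_lt {M : Type*} [AddCommMonoid M] {ℓ d : ℕ} (h : ℓ ≤ d) (f : Fin d → M) :
    ∑ j ∈ univ.filter (fun j : Fin d => (j : ℕ) < ℓ), f j = ∑ i : Fin ℓ, f (Fin.castLE h i) := by
  have hmap : univ.filter (fun j : Fin d => (j : ℕ) < ℓ) = univ.map (Fin.castLEEmb h) := by
    ext j
    simp only [mem_filter, mem_univ, true_and, mem_map, Fin.castLEEmb_apply]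
    exact ⟨fun hj => ⟨⟨j, hj⟩, rfl⟩, by rintro ⟨i, rfl⟩; exact i.2⟩
  rw [hmap, sum_map]
  rfl

/-- The 1-indexed `σ_ℓ`, `σ_{ℓ+1}`, `σ_{k+1}` are the 0-indexed `σ ⟨ℓ - 1, _⟩`, `σ ⟨ℓ, _⟩`,
`σ ⟨k, _⟩`. -/
theorem stmt16 {n d : ℕ} (A U : Matrix (Fin n) (Fin d) ℝ) (V : Matrix (Fin d) (Fin d) ℝ)
    (σ : Fin d → ℝ) (hU : Uᵀ * U = 1) (hV : Vᵀ * V = 1)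
    (hσmono : Antitone σ) (hσpos : ∀ i, 0 ≤ σ i)
    (hA : A = U * Matrix.diagonal σ * Vᵀ)
    (k ℓ : ℕ) (hk : k < d) (hℓk : ℓ ≤ k)
    (ε : ℝ) (hε0 : 0 < ε)
    (hσℓ : 0 < σ ⟨ℓ - 1, by omega⟩)
    (hgap : ε / d ≤ (σ ⟨ℓ - 1, by omega⟩ - σ ⟨ℓ, by omega⟩) / σ ⟨ℓ - 1, by omega⟩)
    (δ : ℝ)
    (W : Matrix (Fin n) (Fin ℓ) ℝ) (hW : Wᵀ * W = 1)
    (hpv : ∀ i : Fin ℓ,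
      σ (Fin.castLE (by omega) i) ^ 2 - δ * σ ⟨k, hk⟩ ^ 2 ≤ ∑ j, ((Aᵀ * W) j i) ^ 2)
    (Aℓ : Matrix (Fin n) (Fin d) ℝ)
    (hAℓ : Aℓ = U * Matrix.diagonal (fun i : Fin d => if (i : ℕ) < ℓ then σ i else 0) * Vᵀ) :
    frob (Aℓᵀ * (1 - W * Wᵀ)) ^ 2 ≤
      ℓ * δ * σ ⟨k, hk⟩ ^ 2 / (1 - (σ ⟨ℓ, by omega⟩ / σ ⟨ℓ - 1, by omega⟩) ^ 2) := by
  have hℓd : ℓ ≤ d := hℓk.trans hk.le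
  set I : Finset (Fin d) := univ.filter (fun j => (j : ℕ) < ℓ) with hI
  have hσ_lt : σ ⟨ℓ, by omega⟩ < σ ⟨ℓ - 1, by omega⟩ := by
    have hd : (0 : ℝ) < d := Nat.cast_pos.2 (by omega)
    linarith [(div_pos_iff_of_pos_right hσℓ).1 ((div_pos hε0 hd).trans_le hgap)]
  have hcapt : ∑ j ∈ I, σ j ^ 2 - ℓ * δ * σ ⟨k, hk⟩ ^ 2 ≤ ∑ j, σ j ^ 2 * overlap U W j := by
    have := sum_le_sum fun i (_ : i ∈ univ) => hpv i
    rw [sum_sub_distrib, sum_const, card_univ, Fintype.card_fin, nsmul_eq_mul] at this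
    rw [← frob_sq_svd_transpose_mul hV, ← hA, frob_sq, sum_comm, hI, Fin.sum_filter_val_lt hℓd]
    linarith
  have hresid : frob (Aℓᵀ * (1 - W * Wᵀ)) ^ 2 = ∑ j ∈ I, σ j ^ 2 * (1 - overlap U W j) := by
    rw [hAℓ, frob_sq_svd_transpose_mul_one_sub hU hV hW, hI, sum_filter]
    exact sum_congr rfl fun j _ => by split_ifs <;> ring
  rw [hresid, div_pow]
  refine sum_mul_one_sub_le (fun j => σ j ^ 2) _ I _ _ _ (sq_nonneg _)
    (pow_lt_pow_left₀ hσ_lt (hσpos _) two_ne_zero) (fun j hj => ?_) (fun j hj => ?_)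
    (overlap_nonneg U W) (overlap_le_one hU hW) ?_ hcapt
  · simp only [hI, mem_filter, mem_univ, true_and] at hj
    exact pow_le_pow_left₀ hσℓ.le (hσmono (Fin.mk_le_mk.2 (by omega))) 2
  · simp only [hI, mem_filter, mem_univ, true_and, not_lt] at hj
    exact pow_le_pow_left₀ (hσpos _) (hσmono (Fin.mk_le_mk.2 (by omega))) 2
  · rw [hI, Fin.card_filter_val_lt, min_eq_right hℓd]
    simpa using sum_overlap_le hU hW
end
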